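/- arXiv:2411.00482 — 2 statements merged into one kernel-verified Lean document; each statement's English description precedes it below -/
import Mathlib

section
/- Let F : ℝⁿ₊ → S^m (n, m ≥ 2) be continuously differentiable, convex and monotonically non-increasing, 0 < a ≤ b, C > 0, and K ≥ 2 an integer with a + K·a/(4C) ≥ b + a/(4C). Define z_{j,k} := (a/2)·e_j' + (a + k·a/(4C))·e_j and d_j := ((2b−a)/a)·C·e_j' − (1/2)·e_j. If F'(z_{j,k}) d_j is not negative semidefinite for all k ∈ {2,…,K}, then F'(x)(C·e_j' − e_j) is not negative semidefinite for every x ∈ [a,b]ⁿ. -/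
open Matrix

attribute [local instance] Matrix.frobeniusNormedAddCommGroup Matrix.frobeniusNormedSpace

/-- Largest eigenvalue (for symmetric matrices, the supremum of the spectrum). -/
noncomputable def lamMax {m : ℕ} (A : Matrix (Fin m) (Fin m) ℝ) : ℝ :=
  sSup (spectrum ℝ A)

/-- Spectral norm of a symmetric matrix: `max (λ_max A) (λ_max (-A))`. -/
noncomputable def specNorm {m : ℕ} (A : Matrix (Fin m) (Fin m) ℝ) : ℝ :=
  max (lamMax A) (lamMax (-A))

/-- Loewner order: `Loewner A B` means `A ⪯ B`. -/
def Loewner {m : ℕ} (A B : Matrix (Fin m) (Fin m) ℝ) : Prop :=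
  (B - A).PosSemidef

/-- The `j`-th standard unit vector `e_j`. -/
noncomputable def eVec (n : ℕ) (j : Fin n) : Fin n → ℝ := Pi.single j (1:ℝ)

/-- The negated unit vector `e_j' = 𝟙 - e_j`. -/
noncomputable def eVec' (n : ℕ) (j : Fin n) : Fin n → ℝ := fun i => 1 - eVec n j i

/-- Maximum norm `‖d‖_∞`. -/
noncomputable def infNorm {n : ℕ} (d : Fin n → ℝ) : ℝ := ⨆ i, |d i|

/-
Write `h = a/(4C)` and `v = C e_j' - e_j`, and suppose `F'(x) v ⪯ 0`. Pick the grid point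
`z = z_{j,k}` with `x_j - z_j ∈ [-2h, -h]`. Then `x - z` is a positive multiple of `v` plus a
nonnegative vector, so monotonicity gives `F'(x)(x - z) ⪯ 0`. Convexity makes `F'` monotone along
`x - z`, whence `F'(z)(x - z) ⪯ 0`. Finally `d_j` is `(2C/a)(x - z)` plus a nonnegative vector, so
`F'(z) d_j ⪯ 0`, contradicting the hypothesis at `k`.
-/

section Loewner

variable {m : ℕ}

lemma loewner_zero_iff {A : Matrix (Fin m) (Fin m) ℝ} : Loewner A 0 ↔ (-A).PosSemidef := by
  rw [Loewner, zero_sub]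

lemma Loewner.trans {A B D : Matrix (Fin m) (Fin m) ℝ} (hAB : Loewner A B) (hBD : Loewner B D) :
    Loewner A D := by
  unfold Loewner at *
  simpa only [sub_add_sub_cancel] using hBD.add hAB

variable {E M : Type*} [AddCommGroup E] [FunLike M E (Matrix (Fin m) (Fin m) ℝ)]

lemma loewner_zero_of_sub_smul [Module ℝ E] [LinearMapClass M ℝ E (Matrix (Fin m) (Fin m) ℝ)]
    {L : M} {u w : E} {c : ℝ} (hc : 0 ≤ c) (hu : Loewner (L u) 0)
    (hwu : Loewner (L (w - c • u)) 0) : Loewner (L w) 0 := by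
  rw [loewner_zero_iff] at *
  have hsplit : -L w = c • -L u + -L (w - c • u) := by
    rw [map_sub, map_smul, smul_neg]
    abel
  rw [hsplit]
  exact (hu.smul hc).add hwu

lemma loewner_map_sub_of_convex [AddMonoidHomClass M E (Matrix (Fin m) (Fin m) ℝ)]
    {F : E → Matrix (Fin m) (Fin m) ℝ} {D : E → M} {x z : E}
    (hzx : Loewner (D z (x - z)) (F x - F z)) (hxz : Loewner (D x (z - x)) (F z - F x)) :
    Loewner (D z (x - z)) (D x (x - z)) := by
  unfold Loewner at *
  convert hzx.add hxz using 1
  rw [← neg_sub x z, map_neg]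
  abel

end Loewner

lemma exists_int_sub_mem_Icc {h s t : ℝ} (hh : 0 < h) {k₀ K : ℤ} (hk₀K : k₀ ≤ K)
    (hlo : s + k₀ * h ≤ t) (hhi : t ≤ s + K * h + h) :
    ∃ k : ℤ, k₀ ≤ k ∧ k ≤ K ∧ t - (s + k * h) ∈ Set.Icc 0 h := by
  set u := (t - s) / h
  have hk₀u : (k₀ : ℝ) ≤ u := by rw [le_div_iff₀ hh]; linarith
  refine ⟨min K ⌊u⌋, le_min hk₀K (Int.le_floor.mpr hk₀u), min_le_left _ _, ?_, ?_⟩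
  · have hku : ((min K ⌊u⌋ : ℤ) : ℝ) * h ≤ t - s := by
      rw [← le_div_iff₀ hh]
      exact le_trans (by exact_mod_cast min_le_right K ⌊u⌋) (Int.floor_le u)
    linarith
  · rcases le_total K ⌊u⌋ with hK | hK
    · rw [min_eq_left hK]
      linarith
    · rw [min_eq_right hK]
      have hu : t - s < (⌊u⌋ + 1) * h := (div_lt_iff₀ hh).mp (Int.lt_floor_add_one u)
      linarith

section AxisVec

variable {n : ℕ} (j : Fin n)

/-- `p e_j' + q e_j`: the points `z_{j,k}` and the directions `d_j`, `C e_j' - e_j` all have this form. -/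
noncomputable def axisVec (p q : ℝ) : Fin n → ℝ := p • eVec' n j + q • eVec n j

lemma axisVec_apply (p q : ℝ) (i : Fin n) : axisVec j p q i = if i = j then q else p := by
  by_cases hij : i = j
  · subst hij
    simp [axisVec, eVec', eVec]
  · simp [axisVec, eVec', eVec, hij]

lemma axisVec_neg (p q : ℝ) : axisVec j p (-q) = p • eVec' n j - q • eVec n j := by
  rw [axisVec, neg_smul, sub_eq_add_neg]

variable {j} {x : Fin n → ℝ} {a t : ℝ}

lemma sub_axisVec_sub_smul_nonneg {C : ℝ} (hx : ∀ i, a ≤ x i) (ht : (t - x j) * C ≤ a / 2) :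
    0 ≤ x - axisVec j (a / 2) t - (t - x j) • axisVec j C (-1) := by
  intro i
  simp only [Pi.zero_apply, Pi.sub_apply, Pi.smul_apply, smul_eq_mul, axisVec_apply]
  split_ifs with hij
  · subst hij
    linarith
  · linarith [hx i]

lemma axisVec_sub_smul_sub_axisVec_nonneg {b α p : ℝ} (hx : ∀ i, x i ≤ b) (hα : 0 ≤ α)
    (hp : α * (b - a / 2) ≤ p) (ht : 1 / 2 ≤ α * (t - x j)) :
    0 ≤ axisVec j p (-(1 / 2)) - α • (x - axisVec j (a / 2) t) := by
  intro i
  simp only [Pi.zero_apply, Pi.sub_apply, Pi.smul_apply, smul_eq_mul, axisVec_apply]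
  split_ifs with hij
  · subst hij
    linarith
  · nlinarith [hx i]

end AxisVec

theorem stmt4_general {n m : ℕ}
    (F : (Fin n → ℝ) → Matrix (Fin m) (Fin m) ℝ)
    (F' : (Fin n → ℝ) → (Fin n → ℝ) →L[ℝ] Matrix (Fin m) (Fin m) ℝ)
    (hmono : ∀ z, (∀ i, 0 < z i) → ∀ δ : Fin n → ℝ, 0 ≤ δ → Loewner (F' z δ) 0)
    (hconv : ∀ z w, (∀ i, 0 < z i) → (∀ i, 0 < w i) →
      Loewner (F' z (w - z)) (F w - F z))
    (a b C : ℝ) (ha : 0 < a) (hC : 0 < C)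
    (K : ℤ) (hK : 2 ≤ K) (hKab : a + K * (a / (4 * C)) ≥ b + a / (4 * C))
    (j : Fin n)
    (hcrit : ∀ k : ℤ, 2 ≤ k → k ≤ K →
      ¬ (-(F' ((a / 2) • eVec' n j + (a + k * (a / (4 * C))) • eVec n j)
            (((2 * b - a) / a * C) • eVec' n j - (1 / 2 : ℝ) • eVec n j))).PosSemidef) :
    ∀ x : Fin n → ℝ, (∀ i, x i ∈ Set.Icc a b) →
      ¬ (-(F' x (C • eVec' n j - eVec n j))).PosSemidef := by
  intro x hx hv
  have hx_pos : ∀ i, 0 < x i := fun i => ha.trans_le (hx i).1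
  set h := a / (4 * C) with hh
  have hhC : h * C = a / 4 := by rw [hh]; field_simp
  obtain ⟨k, hk2, hkK, hδ0, hδh⟩ := exists_int_sub_mem_Icc (h := h) (s := a) (t := x j + 2 * h)
    (by positivity) hK (by push_cast; linarith [(hx j).1]) (by linarith [(hx j).2])
  set z := axisVec j (a / 2) (a + k * h)
  have hz_pos : ∀ i, 0 < z i := by
    have hk : (0 : ℝ) ≤ k * h := by positivity
    intro i
    simp only [z, axisVec_apply]
    split_ifs <;> linarith
  have hv' : Loewner (F' x (axisVec j C (-1))) 0 := by
    rwa [axisVec_neg, one_smul, loewner_zero_iff]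
  have hxz : Loewner (F' x (x - z)) 0 :=
    loewner_zero_of_sub_smul (by linarith) hv' <| hmono x hx_pos _ <|
      sub_axisVec_sub_smul_nonneg (fun i => (hx i).1) (by nlinarith)
  have hzxz : Loewner (F' z (x - z)) 0 :=
    (loewner_map_sub_of_convex (hconv z x hz_pos hx_pos) (hconv x z hx_pos hz_pos)).trans hxz
  have hzd : Loewner (F' z (axisVec j ((2 * b - a) / a * C) (-(1 / 2)))) 0 :=
    loewner_zero_of_sub_smul (c := 2 * C / a) (by positivity) hzxz <| hmono z hz_pos _ <|
      axisVec_sub_smul_sub_axisVec_nonneg (fun i => (hx i).2) (by positivity)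
        (le_of_eq (by field_simp)) (by rw [div_mul_eq_mul_div, le_div_iff₀ ha]; nlinarith)
  rw [axisVec_neg, loewner_zero_iff] at hzd
  exact hcrit k hk2 hkK hzd

theorem stmt4 {n m : ℕ} (hn : 2 ≤ n) (hm : 2 ≤ m)
    (F : (Fin n → ℝ) → Matrix (Fin m) (Fin m) ℝ)
    (F' : (Fin n → ℝ) → (Fin n → ℝ) →L[ℝ] Matrix (Fin m) (Fin m) ℝ)
    (hdiff : ∀ z, (∀ i, 0 < z i) → HasFDerivAt F (F' z) z)
    (hcont : ContinuousOn F' {z | ∀ i, 0 < z i})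
    (hsym : ∀ z, (F z).IsHermitian)
    (hmono : ∀ z, (∀ i, 0 < z i) → ∀ δ : Fin n → ℝ, 0 ≤ δ → Loewner (F' z δ) 0)
    (hconv : ∀ z w, (∀ i, 0 < z i) → (∀ i, 0 < w i) →
      Loewner (F' z (w - z)) (F w - F z))
    (a b C : ℝ) (ha : 0 < a) (hab : a ≤ b) (hC : 0 < C)
    (K : ℤ) (hK : 2 ≤ K) (hKab : a + K * (a / (4 * C)) ≥ b + a / (4 * C))
    (j : Fin n)
    (hcrit : ∀ k : ℤ, 2 ≤ k → k ≤ K →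
      ¬ (-(F' ((a / 2) • eVec' n j + (a + k * (a / (4 * C))) • eVec n j)
            (((2 * b - a) / a * C) • eVec' n j - (1 / 2 : ℝ) • eVec n j))).PosSemidef) :
    ∀ x : Fin n → ℝ, (∀ i, x i ∈ Set.Icc a b) →
      ¬ (-(F' x (C • eVec' n j - eVec n j))).PosSemidef :=
  stmt4_general F F' hmono hconv a b C ha hC K hK hKab j hcrit
end

section
/- Let F : ℝⁿ₊ → S^m (n, m ≥ 2) be continuously differentiable, convex and monotonically non-increasing, 0 < a ≤ b, K := max(⌈4b/a⌉ − 3, 2), z_{j,k} := (a/2)e_j' + (a + k·a/4)e_j, d_j := ((2b−a)/a)e_j' − (1/2)e_j. If F'(z_{j,k}) d_j is not negative semidefinite for all k ∈ {2,…,K} and j ∈ {1,…,n}, then: (a) F'(x) is injective for all x ∈ [a,b]ⁿ and ‖F'(x)d‖₂ ≥ λ‖d‖_∞ for all d, where λ := min_{j,k} λ_max(F'(z_{j,k}) d_j) > 0; (b) F restricted to [a,b]ⁿ is injective and ‖F(x₁) − F(x₂)‖₂ ≥ λ‖x₁ − x₂‖_∞ for all x₁, x₂ ∈ [a,b]ⁿ.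 -/
open Matrix

attribute [local instance] Matrix.frobeniusNormedAddCommGroup Matrix.frobeniusNormedSpace

/-!
Fix `x` in the box and `d` with `‖d‖_∞ = s`; replacing `d` by `-d` if necessary, `d j = -s` for
some `j`. Choose `k` with `x j ∈ [a/2 + k a/4, 3a/4 + k a/4]` and put `z = z_{j,k}`, `t = 2s/a`.
Then `d ≤ t (x - z) ≤ s d_j` componentwise, so monotonicity, the inequality
`F'(z)(x - z) ⪯ F'(x)(x - z)` obtained by adding the convexity inequalities at `x` and `z`, and
monotonicity again give `s F'(z) d_j ⪯ F'(x) d`, hence `λ s ≤ λ_max (F'(x) d)`.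
For `F(x₁) - F(x₂)` one adds the convexity inequality `F'(x₂)(x₁ - x₂) ⪯ F(x₁) - F(x₂)`, and
injectivity follows from `λ > 0`.
-/

open scoped MatrixOrder

section lamMax

variable {m : ℕ} [NeZero m] {A B : Matrix (Fin m) (Fin m) ℝ}

lemma lamMax_le_iff (hA : A.IsHermitian) {c : ℝ} :
    lamMax A ≤ c ↔ A ≤ algebraMap ℝ _ c := by
  rw [le_algebraMap_iff_spectrum_le (ha := hA.isSelfAdjoint), lamMax,
    csSup_le_iff finite_real_spectrum.bddAbove
      (ContinuousFunctionalCalculus.spectrum_nonempty A hA.isSelfAdjoint)]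

lemma lamMax_mono (hA : A.IsHermitian) (hAB : A ≤ B) : lamMax A ≤ lamMax B := by
  have hB : B.IsHermitian := by simpa using hA.add hAB.isHermitian
  exact (lamMax_le_iff hA).2 (hAB.trans ((lamMax_le_iff hB).1 le_rfl))

lemma lamMax_pos (hA : A.IsHermitian) (h : ¬ (-A).PosSemidef) : 0 < lamMax A := by
  contrapose! h
  simpa using Matrix.le_iff.1 ((lamMax_le_iff hA).1 h)

lemma lamMax_smul (hA : A.IsHermitian) {s : ℝ} (hs : 0 ≤ s) :
    lamMax (s • A) = s * lamMax A := by
  rw [lamMax, lamMax, spectrum.smul_eq_smul _ _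
    (ContinuousFunctionalCalculus.spectrum_nonempty A hA.isSelfAdjoint),
    Real.sSup_smul_of_nonneg hs, smul_eq_mul]

lemma specNorm_zero : specNorm (0 : Matrix (Fin m) (Fin m) ℝ) = 0 := by
  simp [specNorm, lamMax, spectrum.zero_eq]

end lamMax

lemma LinearMap.isHermitian_apply_of_nonpos_on_nonneg {ι κ : Type*} [Fintype κ]
    (L : (ι → ℝ) →ₗ[ℝ] Matrix κ κ ℝ) (hL : ∀ δ, 0 ≤ δ → L δ ≤ 0) (d : ι → ℝ) :
    (L d).IsHermitian := by
  have herm : ∀ δ, 0 ≤ δ → (L δ).IsHermitian := fun δ hδ => by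
    simpa using (Matrix.le_iff.1 (hL δ hδ)).isHermitian.neg
  rw [← posPart_sub_negPart d, map_sub]
  exact (herm _ (posPart_nonneg d)).sub (herm _ (negPart_nonneg d))

section infNorm

variable {n : ℕ} {d : Fin n → ℝ}

lemma abs_le_infNorm (i : Fin n) : |d i| ≤ infNorm d :=
  le_ciSup (f := fun i => |d i|) (Set.finite_range _).bddAbove i

lemma infNorm_nonneg (d : Fin n → ℝ) : 0 ≤ infNorm d :=
  Real.iSup_nonneg fun _ => abs_nonneg _

@[simp] lemma infNorm_neg (d : Fin n → ℝ) : infNorm (-d) = infNorm d := by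
  simp [infNorm]

lemma eq_zero_of_infNorm_nonpos (h : infNorm d ≤ 0) : d = 0 :=
  funext fun i => abs_nonpos_iff.1 ((abs_le_infNorm i).trans h)

lemma exists_eq_neg_infNorm [NeZero n] (d : Fin n → ℝ) :
    (∃ j, d j = -infNorm d) ∨ ∃ j, (-d) j = -infNorm (-d) := by
  obtain ⟨j, hj⟩ := exists_eq_ciSup_of_finite (f := fun i => |d i|)
  rcases abs_eq (infNorm_nonneg d) |>.1 hj with h | h
  · exact .inr ⟨j, by simp [h]⟩
  · exact .inl ⟨j, h⟩

lemma eq_zero_of_mul_infNorm_le_specNorm_zero {m : ℕ} [NeZero m] {c : ℝ} (hc : 0 < c)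
    (h : c * infNorm d ≤ specNorm (0 : Matrix (Fin m) (Fin m) ℝ)) : d = 0 := by
  rw [specNorm_zero] at h
  exact eq_zero_of_infNorm_nonpos (nonpos_of_mul_nonpos_right h hc)

end infNorm

section grid

variable {n m : ℕ}

/- `gridPoint a j k`, `testDir a b j`, `gridSize a b` and `gridBound F' a b` are the paper's
`z_{j,k}`, `d_j`, `K` and `λ`. -/

noncomputable def gridPoint (a : ℝ) (j : Fin n) (k : ℤ) : Fin n → ℝ :=
  (a / 2) • eVec' n j + (a + k * (a / 4)) • eVec n j

noncomputable def testDir (a b : ℝ) (j : Fin n) : Fin n → ℝ :=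
  ((2 * b - a) / a) • eVec' n j - (1 / 2 : ℝ) • eVec n j

noncomputable def gridSize (a b : ℝ) : ℤ := max (⌈4 * b / a⌉ - 3) 2

noncomputable def gridBound
    (F' : (Fin n → ℝ) → (Fin n → ℝ) →L[ℝ] Matrix (Fin m) (Fin m) ℝ) (a b : ℝ) : ℝ :=
  ⨅ j : Fin n, ⨅ k : Finset.Icc (2 : ℤ) (gridSize a b),
    lamMax (F' (gridPoint a j k) (testDir a b j))

lemma gridPoint_apply (a : ℝ) (j : Fin n) (k : ℤ) (i : Fin n) :
    gridPoint a j k i = if i = j then a + k * (a / 4) else a / 2 := by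
  by_cases h : i = j <;> simp [gridPoint, eVec', eVec, h]

lemma testDir_apply (a b : ℝ) (j : Fin n) (i : Fin n) :
    testDir a b j i = if i = j then -(1 / 2) else (2 * b - a) / a := by
  by_cases h : i = j <;> simp [testDir, eVec', eVec, h]

lemma gridPoint_pos {a : ℝ} (ha : 0 < a) (j : Fin n) {k : ℤ} (hk : 2 ≤ k) (i : Fin n) :
    0 < gridPoint a j k i := by
  have : (2 : ℝ) ≤ k := by exact_mod_cast hk
  rw [gridPoint_apply]
  split_ifs <;> positivity

lemma exists_gridIndex {a b t : ℝ} (ha : 0 < a) (hat : a ≤ t) (htb : t ≤ b) :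
    ∃ k : ℤ, 2 ≤ k ∧ k ≤ gridSize a b ∧
      a / 2 + k * (a / 4) ≤ t ∧ t ≤ 3 * (a / 4) + k * (a / 4) := by
  have hk_le : (gridSize a t : ℝ) ≤ 4 * t / a - 2 := by
    have : 4 ≤ 4 * t / a := by rw [le_div_iff₀ ha]; linarith
    simp only [gridSize, Int.cast_max, Int.cast_sub]
    push_cast
    exact max_le (by linarith [Int.ceil_lt_add_one (4 * t / a)]) (by linarith)
  have hk_ge : 4 * t / a - 3 ≤ (gridSize a t : ℝ) := by
    simp only [gridSize, Int.cast_max, Int.cast_sub]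
    push_cast
    exact le_max_of_le_left (by linarith [Int.le_ceil (4 * t / a)])
  have hscale : ∀ c : ℝ, (4 * t / a - c) * (a / 4) = t - c * (a / 4) := fun c => by
    field_simp
  have ha4 : (0 : ℝ) ≤ a / 4 := by positivity
  refine ⟨gridSize a t, le_max_right _ _, max_le_max_right _ ?_, ?_, ?_⟩
  · gcongr
  · linarith [mul_le_mul_of_nonneg_right hk_le ha4, hscale 2]
  · linarith [mul_le_mul_of_nonneg_right hk_ge ha4, hscale 3]

lemma smul_sub_gridPoint_mem_Icc {a b s : ℝ} (ha : 0 < a) (hs : 0 ≤ s) {x d : Fin n → ℝ}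
    (hx : ∀ i, x i ∈ Set.Icc a b) {j : Fin n} {k : ℤ} (hk₁ : a / 2 + k * (a / 4) ≤ x j)
    (hk₂ : x j ≤ 3 * (a / 4) + k * (a / 4)) (hdj : d j = -s) (hd : ∀ i, d i ≤ s) :
    (2 * s / a) • (x - gridPoint a j k) ∈ Set.Icc d (s • testDir a b j) := by
  have ht : 0 ≤ 2 * s / a := by positivity
  have hta : 2 * s / a * a = 2 * s := div_mul_cancel₀ _ ha.ne'
  constructor <;> intro i <;>
    simp only [Pi.smul_apply, Pi.sub_apply, smul_eq_mul, gridPoint_apply, testDir_apply] <;>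
    split_ifs with hij
  · subst hij
    linarith [mul_le_mul_of_nonneg_left hk₁ ht]
  · linarith [mul_le_mul_of_nonneg_left (hx i).1 ht, hd i]
  · subst hij
    linarith [mul_le_mul_of_nonneg_left hk₂ ht]
  · have : s * ((2 * b - a) / a) = 2 * s / a * b - s := by field_simp
    linarith [mul_le_mul_of_nonneg_left (hx i).2 ht]

lemma gridBound_le (F' : (Fin n → ℝ) → (Fin n → ℝ) →L[ℝ] Matrix (Fin m) (Fin m) ℝ)
    (a b : ℝ) (j : Fin n) {k : ℤ} (hk₁ : 2 ≤ k) (hk₂ : k ≤ gridSize a b) :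
    gridBound F' a b ≤ lamMax (F' (gridPoint a j k) (testDir a b j)) :=
  (ciInf_le (Set.finite_range _).bddBelow j).trans <|
    ciInf_le (Set.finite_range _).bddBelow
      (⟨k, Finset.mem_Icc.2 ⟨hk₁, hk₂⟩⟩ : Finset.Icc (2 : ℤ) (gridSize a b))

lemma gridBound_pos [NeZero n]
    {F' : (Fin n → ℝ) → (Fin n → ℝ) →L[ℝ] Matrix (Fin m) (Fin m) ℝ} {a b : ℝ}
    (h : ∀ j k, 2 ≤ k → k ≤ gridSize a b →
      0 < lamMax (F' (gridPoint a j k) (testDir a b j))) :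
    0 < gridBound F' a b := by
  have : Nonempty (Finset.Icc (2 : ℤ) (gridSize a b)) :=
    ⟨⟨2, Finset.mem_Icc.2 ⟨le_rfl, le_max_right _ _⟩⟩⟩
  obtain ⟨j, hj⟩ := exists_eq_ciInf_of_finite
    (f := fun j : Fin n => ⨅ k : Finset.Icc (2 : ℤ) (gridSize a b),
      lamMax (F' (gridPoint a j k) (testDir a b j)))
  obtain ⟨k, hk⟩ := exists_eq_ciInf_of_finite
    (f := fun k : Finset.Icc (2 : ℤ) (gridSize a b) =>
      lamMax (F' (gridPoint a j k) (testDir a b j)))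
  rw [gridBound, ← hj, ← hk]
  exact h j k (Finset.mem_Icc.1 k.2).1 (Finset.mem_Icc.1 k.2).2

end grid

section derivative

variable {n m : ℕ} {F : (Fin n → ℝ) → Matrix (Fin m) (Fin m) ℝ}
  {F' : (Fin n → ℝ) → (Fin n → ℝ) →L[ℝ] Matrix (Fin m) (Fin m) ℝ}

def IsNonincreasingDeriv
    (F' : (Fin n → ℝ) → (Fin n → ℝ) →L[ℝ] Matrix (Fin m) (Fin m) ℝ) : Prop :=
  ∀ z, (∀ i, 0 < z i) → ∀ δ : Fin n → ℝ, 0 ≤ δ → F' z δ ≤ 0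

def IsConvexDeriv (F : (Fin n → ℝ) → Matrix (Fin m) (Fin m) ℝ)
    (F' : (Fin n → ℝ) → (Fin n → ℝ) →L[ℝ] Matrix (Fin m) (Fin m) ℝ) : Prop :=
  ∀ z w, (∀ i, 0 < z i) → (∀ i, 0 < w i) → F' z (w - z) ≤ F w - F z

lemma isHermitian_fderiv (hmono : IsNonincreasingDeriv F')
    {z : Fin n → ℝ} (hz : ∀ i, 0 < z i) (v : Fin n → ℝ) : (F' z v).IsHermitian :=
  LinearMap.isHermitian_apply_of_nonpos_on_nonneg (F' z).toLinearMap (hmono z hz) v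

lemma fderiv_sub_le_fderiv_sub (hconv : IsConvexDeriv F F')
    {x z : Fin n → ℝ} (hx : ∀ i, 0 < x i) (hz : ∀ i, 0 < z i) :
    F' z (x - z) ≤ F' x (x - z) :=
  calc F' z (x - z) ≤ F x - F z := hconv z x hz hx
    _ ≤ F' x (x - z) := by
      simpa only [neg_sub, ← map_neg] using neg_le_neg (hconv x z hx hz)

lemma fderiv_le_fderiv_of_mem_Icc (hmono : IsNonincreasingDeriv F')
    (hconv : IsConvexDeriv F F') {x z : Fin n → ℝ} (hx : ∀ i, 0 < x i) (hz : ∀ i, 0 < z i)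
    {t : ℝ} (ht : 0 ≤ t) {d u : Fin n → ℝ} (h : t • (x - z) ∈ Set.Icc d u) :
    F' z u ≤ F' x d :=
  calc F' z u ≤ F' z (t • (x - z)) := (antitone_iff_map_nonpos (F' z)).2 (hmono z hz) h.2
    _ = t • F' z (x - z) := map_smul _ _ _
    _ ≤ t • F' x (x - z) := smul_le_smul_of_nonneg_left (fderiv_sub_le_fderiv_sub hconv hx hz) ht
    _ = F' x (t • (x - z)) := (map_smul _ _ _).symm
    _ ≤ F' x d := (antitone_iff_map_nonpos (F' x)).2 (hmono x hx) h.1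

variable [NeZero m] (hmono : IsNonincreasingDeriv F') (hconv : IsConvexDeriv F F')
  {a b : ℝ} (ha : 0 < a)
include hmono hconv ha

lemma gridBound_mul_infNorm_le_lamMax {x : Fin n → ℝ} (hx : ∀ i, x i ∈ Set.Icc a b)
    {d : Fin n → ℝ} {j : Fin n} (hdj : d j = -infNorm d) :
    gridBound F' a b * infNorm d ≤ lamMax (F' x d) := by
  obtain ⟨k, hk₂, hkK, hk₁, hk₃⟩ := exists_gridIndex ha (hx j).1 (hx j).2
  set z := gridPoint a j k
  have hs := infNorm_nonneg d
  have hxpos : ∀ i, 0 < x i := fun i => ha.trans_le (hx i).1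
  have hzpos : ∀ i, 0 < z i := gridPoint_pos ha j hk₂
  have hmem := smul_sub_gridPoint_mem_Icc (b := b) ha hs hx hk₁ hk₃ hdj
    fun i => (le_abs_self _).trans (abs_le_infNorm i)
  have herm := isHermitian_fderiv hmono hzpos
  calc gridBound F' a b * infNorm d ≤ lamMax (F' z (testDir a b j)) * infNorm d :=
        mul_le_mul_of_nonneg_right (gridBound_le F' a b j hk₂ hkK) hs
    _ = lamMax (F' z (infNorm d • testDir a b j)) := by
        rw [map_smul, lamMax_smul (herm _) hs, mul_comm]
    _ ≤ lamMax (F' x d) := lamMax_mono (herm _)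
        (fderiv_le_fderiv_of_mem_Icc hmono hconv hxpos hzpos (by positivity) hmem)

lemma gridBound_mul_infNorm_le_specNorm_fderiv [NeZero n] ⦃x : Fin n → ℝ⦄
    (hx : ∀ i, x i ∈ Set.Icc a b) (d : Fin n → ℝ) :
    gridBound F' a b * infNorm d ≤ specNorm (F' x d) := by
  rcases exists_eq_neg_infNorm d with ⟨j, hj⟩ | ⟨j, hj⟩
  · exact (gridBound_mul_infNorm_le_lamMax hmono hconv ha hx hj).trans (le_max_left _ _)
  · have := gridBound_mul_infNorm_le_lamMax hmono hconv ha hx hj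
    rw [infNorm_neg, map_neg] at this
    exact this.trans (le_max_right _ _)

lemma gridBound_mul_infNorm_le_lamMax_sub {x₁ x₂ : Fin n → ℝ}
    (hx₁ : ∀ i, x₁ i ∈ Set.Icc a b) (hx₂ : ∀ i, x₂ i ∈ Set.Icc a b) {j : Fin n}
    (hj : (x₁ - x₂) j = -infNorm (x₁ - x₂)) :
    gridBound F' a b * infNorm (x₁ - x₂) ≤ lamMax (F x₁ - F x₂) := by
  have hpos : ∀ {x : Fin n → ℝ}, (∀ i, x i ∈ Set.Icc a b) → ∀ i, 0 < x i :=
    fun hx i => ha.trans_le (hx i).1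
  exact (gridBound_mul_infNorm_le_lamMax hmono hconv ha hx₂ hj).trans <|
    lamMax_mono (isHermitian_fderiv hmono (hpos hx₂) _) (hconv x₂ x₁ (hpos hx₂) (hpos hx₁))

lemma gridBound_mul_infNorm_le_specNorm_sub [NeZero n] ⦃x₁ x₂ : Fin n → ℝ⦄
    (hx₁ : ∀ i, x₁ i ∈ Set.Icc a b) (hx₂ : ∀ i, x₂ i ∈ Set.Icc a b) :
    gridBound F' a b * infNorm (x₁ - x₂) ≤ specNorm (F x₁ - F x₂) := by
  rcases exists_eq_neg_infNorm (x₁ - x₂) with ⟨j, hj⟩ | ⟨j, hj⟩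
  · exact (gridBound_mul_infNorm_le_lamMax_sub hmono hconv ha hx₁ hx₂ hj).trans
      (le_max_left _ _)
  · rw [neg_sub] at hj
    have := gridBound_mul_infNorm_le_lamMax_sub hmono hconv ha hx₂ hx₁ hj
    rw [← neg_sub x₁, infNorm_neg, ← neg_sub (F x₁)] at this
    exact this.trans (le_max_right _ _)

end derivative

theorem stmt5_general {n m : ℕ} (hn : 2 ≤ n) (hm : 2 ≤ m)
    (F : (Fin n → ℝ) → Matrix (Fin m) (Fin m) ℝ)
    (F' : (Fin n → ℝ) → (Fin n → ℝ) →L[ℝ] Matrix (Fin m) (Fin m) ℝ)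
    (hmono : ∀ z, (∀ i, 0 < z i) → ∀ δ : Fin n → ℝ, 0 ≤ δ → Loewner (F' z δ) 0)
    (hconv : ∀ z w, (∀ i, 0 < z i) → (∀ i, 0 < w i) →
      Loewner (F' z (w - z)) (F w - F z))
    (a b : ℝ) (ha : 0 < a)
    (hcrit : ∀ j : Fin n, ∀ k : ℤ, 2 ≤ k → k ≤ max (⌈4 * b / a⌉ - 3) 2 →
      ¬ (-(F' ((a / 2) • eVec' n j + (a + k * (a / 4)) • eVec n j)
            (((2 * b - a) / a) • eVec' n j - (1 / 2 : ℝ) • eVec n j))).PosSemidef) :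
    (0 < ⨅ j : Fin n, ⨅ k : Finset.Icc (2 : ℤ) (max (⌈4 * b / a⌉ - 3) 2),
        lamMax (F' ((a / 2) • eVec' n j + (a + (k : ℤ) * (a / 4)) • eVec n j)
          (((2 * b - a) / a) • eVec' n j - (1 / 2 : ℝ) • eVec n j))) ∧
    (∀ x : Fin n → ℝ, (∀ i, x i ∈ Set.Icc a b) →
      Function.Injective (F' x) ∧
      ∀ d : Fin n → ℝ,
        specNorm (F' x d) ≥
          (⨅ j : Fin n, ⨅ k : Finset.Icc (2 : ℤ) (max (⌈4 * b / a⌉ - 3) 2),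
            lamMax (F' ((a / 2) • eVec' n j + (a + (k : ℤ) * (a / 4)) • eVec n j)
              (((2 * b - a) / a) • eVec' n j - (1 / 2 : ℝ) • eVec n j))) * infNorm d) ∧
    (∀ x₁ x₂ : Fin n → ℝ, (∀ i, x₁ i ∈ Set.Icc a b) → (∀ i, x₂ i ∈ Set.Icc a b) →
      (F x₁ = F x₂ → x₁ = x₂) ∧
      specNorm (F x₁ - F x₂) ≥
        (⨅ j : Fin n, ⨅ k : Finset.Icc (2 : ℤ) (max (⌈4 * b / a⌉ - 3) 2),
          lamMax (F' ((a / 2) • eVec' n j + (a + (k : ℤ) * (a / 4)) • eVec n j)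
            (((2 * b - a) / a) • eVec' n j - (1 / 2 : ℝ) • eVec n j))) * infNorm (x₁ - x₂)) := by
  have : NeZero n := ⟨by omega⟩
  have : NeZero m := ⟨by omega⟩
  have hbound : 0 < gridBound F' a b := gridBound_pos fun j k hk₁ hk₂ =>
    lamMax_pos (isHermitian_fderiv hmono (gridPoint_pos ha j hk₁) _) (hcrit j k hk₁ hk₂)
  have hfderiv := gridBound_mul_infNorm_le_specNorm_fderiv hmono hconv (b := b) ha
  have hsub := gridBound_mul_infNorm_le_specNorm_sub hmono hconv (b := b) ha
  refine ⟨hbound, fun x hx => ⟨fun d₁ d₂ h => ?_, hfderiv hx⟩,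
    fun x₁ x₂ hx₁ hx₂ => ⟨fun h => ?_, hsub hx₁ hx₂⟩⟩
  · exact sub_eq_zero.1 <| eq_zero_of_mul_infNorm_le_specNorm_zero hbound <| by
      simpa [h] using hfderiv hx (d₁ - d₂)
  · exact sub_eq_zero.1 <| eq_zero_of_mul_infNorm_le_specNorm_zero hbound <| by
      simpa [h] using hsub hx₁ hx₂

theorem stmt5 {n m : ℕ} (hn : 2 ≤ n) (hm : 2 ≤ m)
    (F : (Fin n → ℝ) → Matrix (Fin m) (Fin m) ℝ)
    (F' : (Fin n → ℝ) → (Fin n → ℝ) →L[ℝ] Matrix (Fin m) (Fin m) ℝ)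
    (hdiff : ∀ z, (∀ i, 0 < z i) → HasFDerivAt F (F' z) z)
    (hcont : ContinuousOn F' {z | ∀ i, 0 < z i})
    (hsym : ∀ z, (F z).IsHermitian)
    (hmono : ∀ z, (∀ i, 0 < z i) → ∀ δ : Fin n → ℝ, 0 ≤ δ → Loewner (F' z δ) 0)
    (hconv : ∀ z w, (∀ i, 0 < z i) → (∀ i, 0 < w i) →
      Loewner (F' z (w - z)) (F w - F z))
    (a b : ℝ) (ha : 0 < a) (hab : a ≤ b)
    (hcrit : ∀ j : Fin n, ∀ k : ℤ, 2 ≤ k → k ≤ max (⌈4 * b / a⌉ - 3) 2 →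
      ¬ (-(F' ((a / 2) • eVec' n j + (a + k * (a / 4)) • eVec n j)
            (((2 * b - a) / a) • eVec' n j - (1 / 2 : ℝ) • eVec n j))).PosSemidef) :
    (0 < ⨅ j : Fin n, ⨅ k : Finset.Icc (2 : ℤ) (max (⌈4 * b / a⌉ - 3) 2),
        lamMax (F' ((a / 2) • eVec' n j + (a + (k : ℤ) * (a / 4)) • eVec n j)
          (((2 * b - a) / a) • eVec' n j - (1 / 2 : ℝ) • eVec n j))) ∧
    (∀ x : Fin n → ℝ, (∀ i, x i ∈ Set.Icc a b) →
      Function.Injective (F' x) ∧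
      ∀ d : Fin n → ℝ,
        specNorm (F' x d) ≥
          (⨅ j : Fin n, ⨅ k : Finset.Icc (2 : ℤ) (max (⌈4 * b / a⌉ - 3) 2),
            lamMax (F' ((a / 2) • eVec' n j + (a + (k : ℤ) * (a / 4)) • eVec n j)
              (((2 * b - a) / a) • eVec' n j - (1 / 2 : ℝ) • eVec n j))) * infNorm d) ∧
    (∀ x₁ x₂ : Fin n → ℝ, (∀ i, x₁ i ∈ Set.Icc a b) → (∀ i, x₂ i ∈ Set.Icc a b) →
      (F x₁ = F x₂ → x₁ = x₂) ∧
      specNorm (F x₁ - F x₂) ≥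
        (⨅ j : Fin n, ⨅ k : Finset.Icc (2 : ℤ) (max (⌈4 * b / a⌉ - 3) 2),
          lamMax (F' ((a / 2) • eVec' n j + (a + (k : ℤ) * (a / 4)) • eVec n j)
            (((2 * b - a) / a) • eVec' n j - (1 / 2 : ℝ) • eVec n j))) * infNorm (x₁ - x₂)) :=
  stmt5_general hn hm F F' hmono hconv a b ha hcrit
end
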